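/- Let U, V, W be nonempty compact subsets of ℂ and p ∈ [1,∞]. (a) For every A₊ ∈ PE₊(U,V,W), ‖A₊‖_p = max_{B₊ ∈ M₊(U,V,W)} ‖B₊‖_p = M_p. (b) If A₊ ∈ PE₊(U,V,W) is invertible, then ‖A₊⁻¹‖_p ≥ N_p. -/

import Mathlib

open scoped ENNReal

noncomputable section

/-- The sequence space `ℓᵖ(ℤ)` (complex valued). -/
abbrev SeqZ (p : ℝ≥0∞) : Type := lp (fun _ : ℤ => ℂ) p
/-- The sequence space `ℓᵖ(ℕ)` (complex valued). -/
abbrev SeqN (p : ℝ≥0∞) : Type := lp (fun _ : ℕ => ℂ) p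

/-- The three diagonals take values in `U`, `V`, `W` respectively. -/
def RangesIn (U V W : Set ℂ) {ι : Type*} (u v w : ι → ℂ) : Prop :=
  (∀ i, u i ∈ U) ∧ (∀ i, v i ∈ V) ∧ (∀ i, w i ∈ W)

/-- `A` acts on `ℓᵖ(ℤ)` as the bi-infinite tridiagonal matrix with subdiagonal `u`
(entries `a_{i,i-1} = u i`), main diagonal `v` and superdiagonal `w` (`a_{i,i+1} = w i`). -/
def BiActs {p : ℝ≥0∞} [Fact (1 ≤ p)] (A : SeqZ p →L[ℂ] SeqZ p) (u v w : ℤ → ℂ) : Prop :=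
  ∀ (x : SeqZ p) (i : ℤ),
    (A x : ∀ _ : ℤ, ℂ) i =
      u i * (x : ∀ _ : ℤ, ℂ) (i - 1) + v i * (x : ∀ _ : ℤ, ℂ) i +
        w i * (x : ∀ _ : ℤ, ℂ) (i + 1)

/-- `A` acts on `ℓᵖ(ℕ)` as the semi-infinite tridiagonal matrix with subdiagonal `u`
(entries `a_{i,i-1} = u i` for `i ≥ 1`), main diagonal `v` and superdiagonal `w`. -/
def SemiActs {p : ℝ≥0∞} [Fact (1 ≤ p)] (A : SeqN p →L[ℂ] SeqN p) (u v w : ℕ → ℂ) : Prop :=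
  ∀ (x : SeqN p) (i : ℕ),
    (A x : ∀ _ : ℕ, ℂ) i =
      (if i = 0 then 0 else u i * (x : ∀ _ : ℕ, ℂ) (i - 1)) + v i * (x : ∀ _ : ℕ, ℂ) i +
        w i * (x : ∀ _ : ℕ, ℂ) (i + 1)

/-- membership in `M(U,V,W)`: bi-infinite tridiagonal operators over `(U,V,W)`. -/
def MemM (U V W : Set ℂ) {p : ℝ≥0∞} [Fact (1 ≤ p)] (A : SeqZ p →L[ℂ] SeqZ p) : Prop :=
  ∃ u v w : ℤ → ℂ, RangesIn U V W u v w ∧ BiActs A u v w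

/-- membership in `M₊(U,V,W)`: semi-infinite tridiagonal operators over `(U,V,W)`. -/
def MemMPlus (U V W : Set ℂ) {p : ℝ≥0∞} [Fact (1 ≤ p)] (A : SeqN p →L[ℂ] SeqN p) : Prop :=
  ∃ u v w : ℕ → ℂ, RangesIn U V W u v w ∧ SemiActs A u v w

/-- pseudoergodicity of bi-infinite diagonal data: every finite pattern of diagonals over
`(U,V,W)` is reproduced to arbitrary accuracy somewhere along the diagonals. -/
def PseudoergodicZ (U V W : Set ℂ) (u v w : ℤ → ℂ) : Prop :=
  ∀ (n : ℕ) (bu bv bw : Fin n → ℂ), RangesIn U V W bu bv bw →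
    ∀ ε : ℝ, 0 < ε → ∃ k : ℤ, ∀ i : Fin n,
      ‖u (k + (i : ℕ)) - bu i‖ < ε ∧ ‖v (k + (i : ℕ)) - bv i‖ < ε ∧
        ‖w (k + (i : ℕ)) - bw i‖ < ε

/-- pseudoergodicity of semi-infinite diagonal data. -/
def PseudoergodicN (U V W : Set ℂ) (u v w : ℕ → ℂ) : Prop :=
  ∀ (n : ℕ) (bu bv bw : Fin n → ℂ), RangesIn U V W bu bv bw →
    ∀ ε : ℝ, 0 < ε → ∃ k : ℕ, ∀ i : Fin n,
      ‖u (k + (i : ℕ)) - bu i‖ < ε ∧ ‖v (k + (i : ℕ)) - bv i‖ < ε ∧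
        ‖w (k + (i : ℕ)) - bw i‖ < ε

/-- membership in `PE(U,V,W)`: pseudoergodic bi-infinite operators. -/
def MemPE (U V W : Set ℂ) {p : ℝ≥0∞} [Fact (1 ≤ p)] (A : SeqZ p →L[ℂ] SeqZ p) : Prop :=
  ∃ u v w : ℤ → ℂ, RangesIn U V W u v w ∧ PseudoergodicZ U V W u v w ∧ BiActs A u v w

/-- membership in `PE₊(U,V,W)`: pseudoergodic semi-infinite operators. -/
def MemPEPlus (U V W : Set ℂ) {p : ℝ≥0∞} [Fact (1 ≤ p)] (A : SeqN p →L[ℂ] SeqN p) : Prop :=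
  ∃ u v w : ℕ → ℂ, RangesIn U V W u v w ∧ PseudoergodicN U V W u v w ∧ SemiActs A u v w

/-- `(U,V,W)` is compatible: every operator in `M(U,V,W)` is invertible on `ℓᵖ(ℤ)`
for every `p ∈ [1,∞]`. -/
def Compatible (U V W : Set ℂ) : Prop :=
  ∀ (p : ℝ≥0∞) [Fact (1 ≤ p)], ∀ A : SeqZ p →L[ℂ] SeqZ p, MemM U V W A → IsUnit A

/-- `α(A)`: the dimension of the kernel. -/
def alphaDim {E : Type*} [NormedAddCommGroup E] [NormedSpace ℂ E] (A : E →L[ℂ] E) : ℕ :=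
  Module.finrank ℂ (LinearMap.ker (A : E →ₗ[ℂ] E))

/-- `β(A)`: the codimension of the range. -/
def betaDim {E : Type*} [NormedAddCommGroup E] [NormedSpace ℂ E] (A : E →L[ℂ] E) : ℕ :=
  Module.finrank ℂ (E ⧸ LinearMap.range (A : E →ₗ[ℂ] E))

/-- `A` is a Fredholm operator: finite-dimensional kernel and finite-codimensional range. -/
def IsFredholmOp {E : Type*} [NormedAddCommGroup E] [NormedSpace ℂ E] (A : E →L[ℂ] E) : Prop :=
  FiniteDimensional ℂ (LinearMap.ker (A : E →ₗ[ℂ] E)) ∧ FiniteDimensional ℂ (E ⧸ LinearMap.range (A : E →ₗ[ℂ] E))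

/-- the Fredholm index `ind A = α(A) - β(A)`. -/
def fredIndex {E : Type*} [NormedAddCommGroup E] [NormedSpace ℂ E] (A : E →L[ℂ] E) : ℤ :=
  (alphaDim A : ℤ) - (betaDim A : ℤ)

/-- `(U,V,W)` is compatible and the common Fredholm index `κ(U,V,W)` of the semi-infinite
operators in `M₊(U,V,W)` equals `k`. -/
def KappaIs (U V W : Set ℂ) (k : ℤ) : Prop :=
  Compatible U V W ∧
    ∀ (p : ℝ≥0∞) [Fact (1 ≤ p)], ∀ B : SeqN p →L[ℂ] SeqN p, MemMPlus U V W B →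
      IsFredholmOp B ∧ fredIndex B = k

/-- union of the `ℓᵖ`-spectra of all operators in `M(U,V,W)`, at exponent `p`. -/
def specSetZAt (U V W : Set ℂ) (p : ℝ≥0∞) [Fact (1 ≤ p)] : Set ℂ :=
  {lam | ∃ C : SeqZ p →L[ℂ] SeqZ p, MemM U V W C ∧ lam ∈ spectrum ℂ C}

/-- union of the `ℓᵖ`-spectra of all operators in `M₊(U,V,W)`, at exponent `p`. -/
def specSetNAt (U V W : Set ℂ) (p : ℝ≥0∞) [Fact (1 ≤ p)] : Set ℂ :=
  {lam | ∃ C : SeqN p →L[ℂ] SeqN p, MemMPlus U V W C ∧ lam ∈ spectrum ℂ C}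

/-- `Σ(U,V,W)`: the union of the spectra of all operators in `M(U,V,W)`. -/
def SigmaSet (U V W : Set ℂ) : Set ℂ :=
  ⋃ (p : ℝ≥0∞), ⋃ (h : Fact (1 ≤ p)), @specSetZAt U V W p h

/-- `Σ₊(U,V,W)`: the union of the spectra of all operators in `M₊(U,V,W)`. -/
def SigmaPlusSet (U V W : Set ℂ) : Set ℂ :=
  ⋃ (p : ℝ≥0∞), ⋃ (h : Fact (1 ≤ p)), @specSetNAt U V W p h

/-- `V - λ`. -/
def shiftSet (V : Set ℂ) (lam : ℂ) : Set ℂ := (fun v => v - lam) '' V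

/-- `Σ_k(U,V,W) = {λ : (U, V-λ, W) compatible with κ(U, V-λ, W) = k}`. -/
def SigmaK (U V W : Set ℂ) (k : ℤ) : Set ℂ := {lam | KappaIs U (shiftSet V lam) W k}

/-- `Σ_{±1} = Σ_{-1} ∪ Σ_1`. -/
def SigmaPM (U V W : Set ℂ) : Set ℂ := SigmaK U V W (-1) ∪ SigmaK U V W 1

/-- the ellipse `E(u,v,w) = {u t + v + w/t : |t| = 1}`. -/
def ellipse (u v w : ℂ) : Set ℂ := (fun t : ℂ => u * t + v + w / t) '' {t : ℂ | ‖t‖ = 1}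

open Polynomial in
open Classical in
/-- winding number of the loop `t ↦ u t + v + w/t` (`t` on the unit circle, traversed
counter-clockwise) around `lam`, computed, via the argument principle, as the number of
roots (with multiplicity) of `u t² + (v - λ) t + w` in the open unit disk minus the order
of the pole at `0`.  (Valid whenever `lam` does not lie on the ellipse itself.) -/
def windingAt (u v w lam : ℂ) : ℤ :=
  (((C u * X ^ 2 + C (v - lam) * X + C w).roots.filter (fun z => ‖z‖ < 1)).card : ℤ) - 1

/-- `lam` lies inside the oriented ellipse `E(u,v,w)`: not on it, nonzero winding number. -/
def insideEllipse (u v w lam : ℂ) : Prop :=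
  lam ∉ ellipse u v w ∧ windingAt u v w lam ≠ 0

/-- `E_∩`: points inside all the ellipses `E(u,v,w)`, `(u,v,w) ∈ U × V × W`. -/
def Ecap (U V W : Set ℂ) : Set ℂ :=
  {lam | ∀ u ∈ U, ∀ v ∈ V, ∀ w ∈ W, insideEllipse u v w lam}

/-- `E₁`: points of `E_∩` circumnavigated clockwise (winding number `-1`) by all ellipses. -/
def Eone (U V W : Set ℂ) : Set ℂ :=
  {lam ∈ Ecap U V W | ∀ u ∈ U, ∀ v ∈ V, ∀ w ∈ W, windingAt u v w lam = -1}

/-- `E_{-1}`: points of `E_∩` circumnavigated counter-clockwise (winding number `1`). -/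
def EmOne (U V W : Set ℂ) : Set ℂ :=
  {lam ∈ Ecap U V W | ∀ u ∈ U, ∀ v ∈ V, ∀ w ∈ W, windingAt u v w lam = 1}

/-- `E_{±1} = E_{-1} ∪ E₁`. -/
def Epm (U V W : Set ℂ) : Set ℂ := EmOne U V W ∪ Eone U V W

/-- `E_∪`: the union of the filled ellipses. -/
def Ecup (U V W : Set ℂ) : Set ℂ :=
  ⋃ (u ∈ U) (v ∈ V) (w ∈ W), convexHull ℝ (ellipse u v w)

/-- `sup` of moduli over a set, e.g. `u^* = max_{u ∈ U} |u|`. -/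
def supAbs (S : Set ℂ) : ℝ := sSup ((fun z : ℂ => ‖z‖) '' S)

/-- `inf` of moduli over a set, e.g. `u_* = min_{u ∈ U} |u|`. -/
def infAbs (S : Set ℂ) : ℝ := sInf ((fun z : ℂ => ‖z‖) '' S)

/-- `M_p = sup_{B ∈ M(U,V,W)} ‖B‖_p`. -/
def Mnorm (U V W : Set ℂ) (p : ℝ≥0∞) [Fact (1 ≤ p)] : ℝ :=
  sSup {x : ℝ | ∃ B : SeqZ p →L[ℂ] SeqZ p, MemM U V W B ∧ x = ‖B‖}

/-- `N_p = sup_{B ∈ M(U,V,W)} ‖B⁻¹‖_p`. -/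
def Nnorm (U V W : Set ℂ) (p : ℝ≥0∞) [Fact (1 ≤ p)] : ℝ :=
  sSup {x : ℝ | ∃ B : SeqZ p →L[ℂ] SeqZ p, MemM U V W B ∧ x = ‖Ring.inverse B‖}

/-- `M_{+,p} = sup_{B₊ ∈ M₊(U,V,W)} ‖B₊‖_p`. -/
def MnormPlus (U V W : Set ℂ) (p : ℝ≥0∞) [Fact (1 ≤ p)] : ℝ :=
  sSup {x : ℝ | ∃ B : SeqN p →L[ℂ] SeqN p, MemMPlus U V W B ∧ x = ‖B‖}

/-- `N_{+,p} = sup_{B₊ ∈ M₊(U,V,W)} ‖B₊⁻¹‖_p`. -/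
def NnormPlus (U V W : Set ℂ) (p : ℝ≥0∞) [Fact (1 ≤ p)] : ℝ :=
  sSup {x : ℝ | ∃ B : SeqN p →L[ℂ] SeqN p, MemMPlus U V W B ∧ x = ‖Ring.inverse B‖}

/-- `p` is favourable for `(U,V,W)`: `‖A₊⁻¹‖_p = N_{+,p} = N_p` for all `A₊ ∈ PE₊(U,V,W)`. -/
def Favourable (U V W : Set ℂ) (p : ℝ≥0∞) [Fact (1 ≤ p)] : Prop :=
  ∀ A : SeqN p →L[ℂ] SeqN p, MemPEPlus U V W A →
    ‖Ring.inverse A‖ = NnormPlus U V W p ∧ NnormPlus U V W p = Nnorm U V W p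

/-- the `n × n` tridiagonal matrix with diagonals `u` (sub), `v` (main), `w` (super). -/
def JacobiMatrix {n : ℕ} (u v w : Fin n → ℂ) : Matrix (Fin n) (Fin n) ℂ :=
  fun i j =>
    if ((i : ℕ) : ℤ) = ((j : ℕ) : ℤ) + 1 then u i
    else if i = j then v i
    else if ((j : ℕ) : ℤ) = ((i : ℕ) : ℤ) + 1 then w i
    else 0

/-- the `ℓᵖ` norm of a finite complex vector. -/
def pVecNorm (p : ℝ≥0∞) [Fact (1 ≤ p)] {n : ℕ} (x : Fin n → ℂ) : ℝ :=
  ‖(WithLp.equiv p (Fin n → ℂ)).symm x‖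

/-- the operator norm of an `n × n` matrix acting on `(ℂⁿ, ‖·‖_p)`. -/
def matOpNorm (p : ℝ≥0∞) [Fact (1 ≤ p)] {n : ℕ} (F : Matrix (Fin n) (Fin n) ℂ) : ℝ :=
  sInf {c : ℝ | 0 ≤ c ∧ ∀ x : Fin n → ℂ, pVecNorm p (F.mulVec x) ≤ c * pVecNorm p x}

/-- the `p`-operator norm of the inverse matrix. -/
def matInvNorm (p : ℝ≥0∞) [Fact (1 ≤ p)] {n : ℕ} (F : Matrix (Fin n) (Fin n) ℂ) : ℝ :=
  matOpNorm p F⁻¹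

/-- `M_{n,p}`: sup of the `p`-norms of the `n × n` tridiagonal matrices over `(U,V,W)`. -/
def MnormFinN (U V W : Set ℂ) (p : ℝ≥0∞) [Fact (1 ≤ p)] (n : ℕ) : ℝ :=
  sSup {x : ℝ | ∃ u v w : Fin n → ℂ, RangesIn U V W u v w ∧
    x = matOpNorm p (JacobiMatrix u v w)}

/-- `M_{fin,p}`: sup of the `p`-norms of all finite tridiagonal matrices over `(U,V,W)`. -/
def MnormFin (U V W : Set ℂ) (p : ℝ≥0∞) [Fact (1 ≤ p)] : ℝ :=
  sSup {x : ℝ | ∃ (n : ℕ) (u v w : Fin n → ℂ), RangesIn U V W u v w ∧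
    x = matOpNorm p (JacobiMatrix u v w)}

/-- `N_{fin,p}`: sup of the `p`-norms of the inverses of all finite tridiagonal matrices. -/
def NnormFin (U V W : Set ℂ) (p : ℝ≥0∞) [Fact (1 ≤ p)] : ℝ :=
  sSup {x : ℝ | ∃ (n : ℕ) (u v w : Fin n → ℂ), RangesIn U V W u v w ∧
    x = matInvNorm p (JacobiMatrix u v w)}

/-- entry `(i,j)` of the bi-infinite tridiagonal matrix with diagonals `u`, `v`, `w`. -/
def secEntryZ (u v w : ℤ → ℂ) (i j : ℤ) : ℂ :=
  if i = j + 1 then u i else if i = j then v i else if j = i + 1 then w i else 0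

/-- the finite section `(a_{ij})_{i,j=l}^{r}` of the bi-infinite tridiagonal matrix. -/
def finSecZ (u v w : ℤ → ℂ) (l r : ℤ) :
    Matrix (Fin (r + 1 - l).toNat) (Fin (r + 1 - l).toNat) ℂ :=
  fun i j => secEntryZ u v w (l + (i : ℕ)) (l + (j : ℕ))

/-- entry `(i,j)` of the semi-infinite tridiagonal matrix with diagonals `u`, `v`, `w`. -/
def secEntryN (u v w : ℕ → ℂ) (i j : ℕ) : ℂ :=
  if i = j + 1 then u i else if i = j then v i else if j = i + 1 then w i else 0

/-- the `n`-th finite section (first `n` rows and columns) of the semi-infinite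
tridiagonal matrix with diagonals `u`, `v`, `w`. -/
def finSecN (u v w : ℕ → ℂ) (n : ℕ) : Matrix (Fin n) (Fin n) ℂ :=
  fun i j => secEntryN u v w i j

/-- stability of the sequence of finite sections of a bi-infinite tridiagonal matrix with
cut-off sequences `l`, `r`: eventually invertible with uniformly bounded inverses. -/
def StableSecsZ (p : ℝ≥0∞) [Fact (1 ≤ p)] (u v w : ℤ → ℂ) (l r : ℕ → ℤ) : Prop :=
  ∃ (n₀ : ℕ) (c : ℝ), ∀ n, n₀ ≤ n →
    IsUnit (finSecZ u v w (l n) (r n)) ∧ matInvNorm p (finSecZ u v w (l n) (r n)) ≤ c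

/-- stability of the sequence of finite sections of a semi-infinite tridiagonal matrix. -/
def StableSecsN (p : ℝ≥0∞) [Fact (1 ≤ p)] (u v w : ℕ → ℂ) (r : ℕ → ℕ) : Prop :=
  ∃ (n₀ : ℕ) (c : ℝ), ∀ n, n₀ ≤ n →
    IsUnit (finSecN u v w (r n)) ∧ matInvNorm p (finSecN u v w (r n)) ≤ c

/-- the full finite section method applies to every operator in `M(U,V,W)`:
the operator is invertible and the finite sections `(a_{ij})_{i,j=-n}^{n}` are stable. -/
def FullFSMAppliesZ (U V W : Set ℂ) : Prop :=
  ∀ (p : ℝ≥0∞) [Fact (1 ≤ p)], ∀ u v w : ℤ → ℂ, RangesIn U V W u v w →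
    ∀ A : SeqZ p →L[ℂ] SeqZ p, BiActs A u v w →
      IsUnit A ∧ StableSecsZ p u v w (fun n => -(n : ℤ)) (fun n => (n : ℤ))

/-- the full finite section method applies to every operator in `M₊(U,V,W)`:
the operator is invertible and the finite sections `(a_{ij})_{i,j=1}^{n}` are stable. -/
def FullFSMAppliesN (U V W : Set ℂ) : Prop :=
  ∀ (p : ℝ≥0∞) [Fact (1 ≤ p)], ∀ u v w : ℕ → ℂ, RangesIn U V W u v w →
    ∀ A : SeqN p →L[ℂ] SeqN p, SemiActs A u v w →
      IsUnit A ∧ StableSecsN p u v w (fun n => n)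

/-- one operator in `PE₊(U,V,W)` is invertible (on some, equivalently each, `ℓᵖ(ℕ)`). -/
def PEPlusInvAt (U V W : Set ℂ) (p : ℝ≥0∞) [Fact (1 ≤ p)] : Prop :=
  ∃ B : SeqN p →L[ℂ] SeqN p, MemPEPlus U V W B ∧ IsUnit B

def ExistsInvPEPlus (U V W : Set ℂ) : Prop :=
  ∃ (p : ℝ≥0∞) (h : Fact (1 ≤ p)), @PEPlusInvAt U V W p h

/-- one operator in `PE₊(U,V,W)` is Fredholm of index `0`. -/
def PEPlusFred0At (U V W : Set ℂ) (p : ℝ≥0∞) [Fact (1 ≤ p)] : Prop :=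
  ∃ B : SeqN p →L[ℂ] SeqN p, MemPEPlus U V W B ∧ IsFredholmOp B ∧ fredIndex B = 0

def ExistsFred0PEPlus (U V W : Set ℂ) : Prop :=
  ∃ (p : ℝ≥0∞) (h : Fact (1 ≤ p)), @PEPlusFred0At U V W p h

/-- all operators in `M₊(U,V,W)` are invertible (on every `ℓᵖ(ℕ)`). -/
def AllMPlusInv (U V W : Set ℂ) : Prop :=
  ∀ (p : ℝ≥0∞) [Fact (1 ≤ p)], ∀ B : SeqN p →L[ℂ] SeqN p, MemMPlus U V W B → IsUnit B

/-- the `ε`-pseudospectrum of a bounded operator (the spectrum together with the points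
where the resolvent has norm `> 1/ε`). -/
def pspec {E : Type*} [NormedAddCommGroup E] [NormedSpace ℂ E] (ε : ℝ)
    (A : E →L[ℂ] E) : Set ℂ :=
  {lam | ¬IsUnit (A - lam • (1 : E →L[ℂ] E)) ∨
    1 / ε < ‖Ring.inverse (A - lam • (1 : E →L[ℂ] E))‖}

/-- the `ε`-pseudospectrum of an `n × n` matrix, in the `p`-operator norm. -/
def pspecMat (p : ℝ≥0∞) [Fact (1 ≤ p)] {n : ℕ} (ε : ℝ) (F : Matrix (Fin n) (Fin n) ℂ) :
    Set ℂ :=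
  {lam | ¬IsUnit (F - lam • (1 : Matrix (Fin n) (Fin n) ℂ)) ∨
    1 / ε < matInvNorm p (F - lam • (1 : Matrix (Fin n) (Fin n) ℂ))}

/-- `Σ_ε^p`: union of the `ε`-pseudospectra of all operators in `M(U,V,W)`. -/
def SigmaEps (U V W : Set ℂ) (p : ℝ≥0∞) [Fact (1 ≤ p)] (ε : ℝ) : Set ℂ :=
  {lam | ∃ B : SeqZ p →L[ℂ] SeqZ p, MemM U V W B ∧ lam ∈ pspec ε B}

/-- `Σ_{+,ε}^p`: union of the `ε`-pseudospectra of all operators in `M₊(U,V,W)`. -/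
def SigmaPlusEps (U V W : Set ℂ) (p : ℝ≥0∞) [Fact (1 ≤ p)] (ε : ℝ) : Set ℂ :=
  {lam | ∃ B : SeqN p →L[ℂ] SeqN p, MemMPlus U V W B ∧ lam ∈ pspec ε B}

/-- `p` is favourable for all the (compatible, index zero) shifted triples `(U, V-λ, W)`. -/
def FavAll (U V W : Set ℂ) (p : ℝ≥0∞) [Fact (1 ≤ p)] : Prop :=
  ∀ lam : ℂ, KappaIs U (shiftSet V lam) W 0 → Favourable U (shiftSet V lam) W p

end

/-!
Pseudoergodicity lets every finite piece of an operator `B ∈ M(U,V,W)` be found, up to `ε`,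
as a shifted piece of `A₊`. Hence for finitely supported `x` the norm `‖B x‖` is approximated
by `‖A₊ y‖`, where `y` is a shifted copy of `x`; this gives `‖B x‖ ≤ ‖A₊‖ ‖x‖` and, for
invertible `A₊`, `‖x‖ ≤ ‖A₊⁻¹‖ ‖B x‖`. Both bounds pass to all of `ℓᵖ(ℤ)`: by density when
`p < ∞`; when `p = ∞`, the upper bound because `(B x) i` only sees `x` near `i`, the lower bound
by cutting `x` off with a wide tent, whose commutator with `B` is small.
Conversely every `B₊ ∈ M₊(U,V,W)` is the compression to `ℓᵖ(ℕ)` of some `B ∈ M(U,V,W)`, so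
`‖B₊‖ ≤ ‖B‖`; for `B₊ = A₊` this shows that `‖A₊‖` is attained in `M(U,V,W)`.
-/

open Function Set Filter Topology

section WeightedComposition

variable {ι κ : Type*} {p : ℝ≥0∞} [Fact (1 ≤ p)]

theorem sum_rpow_le_of_norm_le_comp (hp : p ≠ ∞) (f : lp (fun _ : ι => ℂ) p) {g : κ → ℂ}
    {e : κ → ι} (he : InjOn e (support g)) {C : ℝ} (hC : 0 ≤ C)
    (h : ∀ k, ‖g k‖ ≤ C * ‖f (e k)‖) (s : Finset κ) :
    ∑ k ∈ s, ‖g k‖ ^ p.toReal ≤ (C * ‖f‖) ^ p.toReal := by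
  classical
  have hq : 0 < p.toReal := ENNReal.toReal_pos (zero_lt_one.trans_le Fact.out).ne' hp
  rw [← Finset.sum_filter_of_ne (p := fun k => g k ≠ 0) fun k _ hk hg => hk (by
    simp [hg, Real.zero_rpow hq.ne'])]
  calc ∑ k ∈ s with g k ≠ 0, ‖g k‖ ^ p.toReal
      ≤ ∑ k ∈ s with g k ≠ 0, C ^ p.toReal * ‖f (e k)‖ ^ p.toReal := by
        gcongr with k
        rw [← Real.mul_rpow hC (norm_nonneg _)]
        exact Real.rpow_le_rpow (norm_nonneg _) (h k) hq.le
    _ = C ^ p.toReal * ∑ i ∈ (s.filter (g · ≠ 0)).image e, ‖f i‖ ^ p.toReal := by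
        rw [Finset.mul_sum]
        exact (Finset.sum_image (f := fun i => C ^ p.toReal * ‖f i‖ ^ p.toReal)
          (s := s.filter (g · ≠ 0)) fun a ha b hb =>
          he (Finset.mem_filter.1 ha).2 (Finset.mem_filter.1 hb).2).symm
    _ ≤ C ^ p.toReal * ‖f‖ ^ p.toReal := by
        gcongr
        exact lp.sum_rpow_le_norm_rpow hq f _
    _ = (C * ‖f‖) ^ p.toReal := (Real.mul_rpow hC (norm_nonneg _)).symm

theorem memℓp_of_norm_le_comp (f : lp (fun _ : ι => ℂ) p) {g : κ → ℂ} {e : κ → ι}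
    (he : InjOn e (support g)) {C : ℝ} (hC : 0 ≤ C) (h : ∀ k, ‖g k‖ ≤ C * ‖f (e k)‖) :
    Memℓp g p := by
  rcases eq_or_ne p ∞ with rfl | hp
  · refine memℓp_infty ⟨C * ‖f‖, ?_⟩
    rintro - ⟨k, rfl⟩
    exact (h k).trans (by gcongr; exact lp.norm_apply_le_norm ENNReal.top_ne_zero f _)
  · exact memℓp_gen' (sum_rpow_le_of_norm_le_comp hp f he hC h)

theorem lp.norm_le_of_norm_le_comp (f : lp (fun _ : ι => ℂ) p) {g : lp (fun _ : κ => ℂ) p}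
    {e : κ → ι} (he : InjOn e (support g)) {C : ℝ} (hC : 0 ≤ C)
    (h : ∀ k, ‖g k‖ ≤ C * ‖f (e k)‖) : ‖g‖ ≤ C * ‖f‖ := by
  rcases eq_or_ne p ∞ with rfl | hp
  · refine lp.norm_le_of_forall_le (by positivity) fun k => (h k).trans ?_
    gcongr
    exact lp.norm_apply_le_norm ENNReal.top_ne_zero f _
  · exact lp.norm_le_of_forall_sum_le (ENNReal.toReal_pos (zero_lt_one.trans_le Fact.out).ne' hp)
      (by positivity) (sum_rpow_le_of_norm_le_comp hp f he hC h)

theorem norm_le_comp_invFun [Nonempty κ] {e : κ → ι} (he : Injective e) {f : ι → ℂ}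
    {g : κ → ℂ} (hf : support f ⊆ range e) (hfg : ∀ k, f (e k) = g k) (i : ι) :
    ‖f i‖ ≤ 1 * ‖g (invFun e i)‖ := by
  by_cases hi : f i = 0
  · simp [hi]
  obtain ⟨k, rfl⟩ := hf hi
  rw [leftInverse_invFun he k, hfg, one_mul]

theorem memℓp_of_comp_eq [Nonempty κ] {e : κ → ι} (he : Injective e)
    (g : lp (fun _ : κ => ℂ) p) {f : ι → ℂ} (hf : support f ⊆ range e)
    (hfg : ∀ k, f (e k) = g k) : Memℓp f p :=
  memℓp_of_norm_le_comp g ((LeftInvOn.injOn fun _ hi => invFun_eq hi).mono hf) zero_le_one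
    (norm_le_comp_invFun he hf hfg)

theorem lp.norm_eq_of_comp_eq [Nonempty κ] {e : κ → ι} (he : Injective e)
    {f : lp (fun _ : ι => ℂ) p} {g : lp (fun _ : κ => ℂ) p} (hf : support f ⊆ range e)
    (hfg : ∀ k, f (e k) = g k) : ‖f‖ = ‖g‖ := by
  refine le_antisymm ?_ ?_
  · simpa using lp.norm_le_of_norm_le_comp g ((LeftInvOn.injOn fun _ hi => invFun_eq hi).mono hf)
      zero_le_one (norm_le_comp_invFun he hf hfg)
  · simpa using lp.norm_le_of_norm_le_comp f he.injOn zero_le_one fun k => by rw [hfg, one_mul]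

theorem norm_mul_le_of_ne_zero {a b : ℂ} {C : ℝ} (h : b ≠ 0 → ‖a‖ ≤ C) :
    ‖a * b‖ ≤ C * ‖b‖ := by
  by_cases hb : b = 0
  · simp [hb]
  · rw [norm_mul]
    exact mul_le_mul_of_nonneg_right (h hb) (norm_nonneg b)

theorem exists_lp_weighted_comp (f : lp (fun _ : ι => ℂ) p) {e : κ → ι} (he : Injective e)
    {a : κ → ℂ} {C : ℝ} (hC : 0 ≤ C) (ha : ∀ k, f (e k) ≠ 0 → ‖a k‖ ≤ C) :
    ∃ g : lp (fun _ : κ => ℂ) p, (∀ k, g k = a k * f (e k)) ∧ ‖g‖ ≤ C * ‖f‖ := by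
  have h k : ‖a k * f (e k)‖ ≤ C * ‖f (e k)‖ := norm_mul_le_of_ne_zero (ha k)
  exact ⟨⟨_, memℓp_of_norm_le_comp f he.injOn hC h⟩, fun _ => rfl,
    lp.norm_le_of_norm_le_comp f he.injOn hC h⟩

variable (f : lp (fun _ : ι => ℂ) p) {e₁ e₂ e₃ : κ → ι} (he₁ : Injective e₁)
  (he₂ : Injective e₂) (he₃ : Injective e₃) {a₁ a₂ a₃ : κ → ℂ} {C : ℝ} (hC : 0 ≤ C)
  (ha₁ : ∀ k, f (e₁ k) ≠ 0 → ‖a₁ k‖ ≤ C) (ha₂ : ∀ k, f (e₂ k) ≠ 0 → ‖a₂ k‖ ≤ C)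
  (ha₃ : ∀ k, f (e₃ k) ≠ 0 → ‖a₃ k‖ ≤ C)
include he₁ he₂ he₃ hC ha₁ ha₂ ha₃

theorem memℓp_three_terms :
    Memℓp (fun k => a₁ k * f (e₁ k) + a₂ k * f (e₂ k) + a₃ k * f (e₃ k)) p := by
  obtain ⟨g₁, hg₁, -⟩ := exists_lp_weighted_comp f he₁ hC ha₁
  obtain ⟨g₂, hg₂, -⟩ := exists_lp_weighted_comp f he₂ hC ha₂
  obtain ⟨g₃, hg₃, -⟩ := exists_lp_weighted_comp f he₃ hC ha₃
  have : (fun k => a₁ k * f (e₁ k) + a₂ k * f (e₂ k) + a₃ k * f (e₃ k)) = ⇑(g₁ + g₂ + g₃) :=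
    funext fun k => by simp [hg₁, hg₂, hg₃]
  exact this ▸ (g₁ + g₂ + g₃).2

theorem lp.norm_le_three_terms {g : lp (fun _ : κ => ℂ) p}
    (hg : ∀ k, g k = a₁ k * f (e₁ k) + a₂ k * f (e₂ k) + a₃ k * f (e₃ k)) :
    ‖g‖ ≤ 3 * C * ‖f‖ := by
  obtain ⟨g₁, hg₁, h₁⟩ := exists_lp_weighted_comp f he₁ hC ha₁
  obtain ⟨g₂, hg₂, h₂⟩ := exists_lp_weighted_comp f he₂ hC ha₂
  obtain ⟨g₃, hg₃, h₃⟩ := exists_lp_weighted_comp f he₃ hC ha₃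
  have : g = g₁ + g₂ + g₃ := lp.ext <| funext fun k => by simp [hg, hg₁, hg₂, hg₃]
  calc ‖g‖ ≤ ‖g₁‖ + ‖g₂‖ + ‖g₃‖ := this ▸ norm_add₃_le
    _ ≤ 3 * C * ‖f‖ := by linarith

end WeightedComposition

section Tridiagonal

variable {p : ℝ≥0∞} [Fact (1 ≤ p)]

theorem norm_apply_single_le {α : Type*} [DecidableEq α]
    (T : lp (fun _ : α => ℂ) p →L[ℂ] lp (fun _ : α => ℂ) p) (i j : α) :
    ‖T (lp.single (E := fun _ : α => ℂ) p j 1) i‖ ≤ ‖T‖ := by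
  have hp : 0 < p := zero_lt_one.trans_le Fact.out
  calc ‖T (lp.single (E := fun _ : α => ℂ) p j 1) i‖
      ≤ ‖T (lp.single (E := fun _ : α => ℂ) p j 1)‖ := lp.norm_apply_le_norm hp.ne' _ i
    _ ≤ ‖T‖ * ‖lp.single (E := fun _ : α => ℂ) p j 1‖ := T.le_opNorm _
    _ = ‖T‖ := by rw [lp.norm_single hp, norm_one, mul_one]

theorem BiActs.norm_le_opNorm {B : SeqZ p →L[ℂ] SeqZ p} {u v w : ℤ → ℂ} (hB : BiActs B u v w)
    (i : ℤ) : ‖u i‖ ≤ ‖B‖ ∧ ‖w i‖ ≤ ‖B‖ := by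
  classical
  constructor
  · have h := norm_apply_single_le B i (i - 1)
    rw [hB] at h
    simpa [lp.single_apply, Pi.single_apply, show i + 1 ≠ i - 1 by omega] using h
  · have h := norm_apply_single_le B i (i + 1)
    rw [hB] at h
    simpa [lp.single_apply, Pi.single_apply, show i - 1 ≠ i + 1 by omega] using h

theorem SemiActs.norm_le_opNorm {B : SeqN p →L[ℂ] SeqN p} {u v w : ℕ → ℂ} (hB : SemiActs B u v w)
    (n : ℕ) : ‖u (n + 1)‖ ≤ ‖B‖ ∧ ‖v n‖ ≤ ‖B‖ ∧ ‖w n‖ ≤ ‖B‖ := by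
  classical
  refine ⟨?_, ?_, ?_⟩
  · have h := norm_apply_single_le B (n + 1) n
    rw [hB] at h
    simpa [lp.single_apply, Pi.single_apply, show n + 1 + 1 ≠ n by omega] using h
  · have h := norm_apply_single_le B n n
    rw [hB] at h
    rcases show n = 0 ∨ n - 1 ≠ n by omega with hn | hn <;>
      simpa [lp.single_apply, Pi.single_apply, hn] using h
  · have h := norm_apply_single_le B n (n + 1)
    rw [hB] at h
    simpa [lp.single_apply, Pi.single_apply] using h

theorem exists_biActs {u v w : ℤ → ℂ} {K : ℝ} (hu : ∀ i, ‖u i‖ ≤ K) (hv : ∀ i, ‖v i‖ ≤ K)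
    (hw : ∀ i, ‖w i‖ ≤ K) : ∃ B : SeqZ p →L[ℂ] SeqZ p, BiActs B u v w := by
  have hK : 0 ≤ K := (norm_nonneg _).trans (hu 0)
  let T : SeqZ p →ₗ[ℂ] SeqZ p :=
    { toFun := fun x => ⟨_, memℓp_three_terms x (sub_left_injective (b := (1 : ℤ))) injective_id
        (add_left_injective (1 : ℤ)) hK (fun i _ => hu i) (fun i _ => hv i) (fun i _ => hw i)⟩
      map_add' := fun x y => lp.ext <| funext fun i => by
        simp only [lp.coeFn_add, Pi.add_apply]; ring
      map_smul' := fun c x => lp.ext <| funext fun i => by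
        simp only [lp.coeFn_smul, Pi.smul_apply, smul_eq_mul, RingHom.id_apply]; ring }
  refine ⟨T.mkContinuous (3 * K) fun x => ?_, fun x i => rfl⟩
  exact lp.norm_le_three_terms x (sub_left_injective (b := (1 : ℤ))) injective_id
    (add_left_injective (1 : ℤ)) hK (fun i _ => hu i) (fun i _ => hv i) (fun i _ => hw i)
    fun i => rfl

theorem SemiActs.exists_memM_norm_le {U V W : Set ℂ} {B : SeqN p →L[ℂ] SeqN p}
    {u v w : ℕ → ℂ} (hB : SemiActs B u v w) (hr : RangesIn U V W u v w) :
    ∃ B' : SeqZ p →L[ℂ] SeqZ p, MemM U V W B' ∧ ‖B‖ ≤ ‖B'‖ := by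
  -- `u 0` is not an entry of `B`, so the subdiagonal is continued to the left by `u 1`
  obtain ⟨B', hB'⟩ := exists_biActs (p := p) (u := fun i => u ((i - 1).toNat + 1))
    (v := fun i => v i.toNat) (w := fun i => w i.toNat) (fun _ => (hB.norm_le_opNorm _).1)
    (fun _ => (hB.norm_le_opNorm _).2.1) (fun _ => (hB.norm_le_opNorm _).2.2)
  refine ⟨B', ⟨_, _, _, ⟨fun _ => hr.1 _, fun _ => hr.2.1 _, fun _ => hr.2.2 _⟩, hB'⟩, ?_⟩
  refine B.opNorm_le_bound (norm_nonneg _) fun x => ?_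
  have hsupp : support (extend ((↑) : ℕ → ℤ) x 0) ⊆ range ((↑) : ℕ → ℤ) := fun i hi => by
    by_contra h
    exact hi (extend_apply' _ _ _ h)
  have hext (n : ℕ) : extend ((↑) : ℕ → ℤ) x 0 n = x n := Nat.cast_injective.extend_apply _ _ _
  let X : SeqZ p := ⟨_, memℓp_of_comp_eq Nat.cast_injective x hsupp hext⟩
  have hBX (n : ℕ) : B x n = B' X n := by
    rw [hB, hB']
    rcases n with _ | n
    · have h0 : extend ((↑) : ℕ → ℤ) x 0 0 = x 0 := by simpa using hext 0
      have h1 : extend ((↑) : ℕ → ℤ) x 0 1 = x 1 := by simpa using hext 1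
      simp [X, h0, h1]
    · rw [show ((n + 1 : ℕ) : ℤ) - 1 = n by push_cast; ring,
        show ((n + 1 : ℕ) : ℤ) + 1 = ((n + 2 : ℕ) : ℤ) by push_cast; ring]
      simp only [X, hext]
      simp
  calc ‖B x‖ ≤ 1 * ‖B' X‖ := lp.norm_le_of_norm_le_comp (B' X) Nat.cast_injective.injOn
        zero_le_one fun n => by rw [hBX, one_mul]
    _ ≤ ‖B'‖ * ‖x‖ := by
        rw [one_mul, ← lp.norm_eq_of_comp_eq (f := X) Nat.cast_injective hsupp hext]
        exact B'.le_opNorm X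

end Tridiagonal

noncomputable def tent (i₀ : ℤ) (n : ℕ) (j : ℤ) : ℝ := max (1 - |(j : ℝ) - i₀| / (n + 1)) 0

namespace tent

variable (i₀ : ℤ) (n : ℕ)

theorem nonneg (j : ℤ) : 0 ≤ tent i₀ n j := le_max_right _ _

theorem le_one (j : ℤ) : tent i₀ n j ≤ 1 :=
  max_le (sub_le_self _ (by positivity)) zero_le_one

@[simp] theorem self : tent i₀ n i₀ = 1 := by simp [tent]

theorem support_subset : support (tent i₀ n) ⊆ Icc (i₀ - n) (i₀ + n) := fun j hj => by
  have h : |(j : ℝ) - i₀| < n + 1 := by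
    by_contra h
    exact hj (max_eq_right (by rw [sub_nonpos, le_div_iff₀ (by positivity)]; linarith))
  have h' : |j - i₀| < n + 1 := by exact_mod_cast h
  rw [abs_lt] at h'
  exact ⟨by omega, by omega⟩

theorem abs_sub_le (j j' : ℤ) : |tent i₀ n j - tent i₀ n j'| ≤ |(j : ℝ) - j'| / (n + 1) := by
  have hn : (0 : ℝ) < n + 1 := by positivity
  calc |tent i₀ n j - tent i₀ n j'|
      ≤ |(1 - |(j : ℝ) - i₀| / (n + 1)) - (1 - |(j' : ℝ) - i₀| / (n + 1))| :=
        abs_max_sub_max_le_abs _ _ _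
    _ = |(|(j : ℝ) - i₀| - |(j' : ℝ) - i₀|)| / (n + 1) := by
        have e : (1 - |(j : ℝ) - i₀| / (n + 1)) - (1 - |(j' : ℝ) - i₀| / (n + 1)) =
            -((|(j : ℝ) - i₀| - |(j' : ℝ) - i₀|) / (n + 1)) := by ring
        rw [e, abs_neg, abs_div, abs_of_pos hn]
    _ ≤ |(j : ℝ) - j'| / (n + 1) := by
        rw [div_le_div_iff_of_pos_right hn]
        simpa using abs_abs_sub_abs_le_abs_sub ((j : ℝ) - i₀) ((j' : ℝ) - i₀)

end tent

section FiniteSupport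

variable {p : ℝ≥0∞} [Fact (1 ≤ p)] {B : SeqZ p →L[ℂ] SeqZ p} {u v w : ℤ → ℂ}

theorem lp.dense_finite_support {ι : Type*} (hp : p ≠ ∞) :
    Dense {x : lp (fun _ : ι => ℂ) p | (support ⇑x).Finite} := by
  classical
  intro x
  refine mem_closure_of_tendsto (lp.hasSum_single hp x)
    (Eventually.of_forall fun F => F.finite_toSet.subset fun i hi => ?_)
  by_contra hiF
  refine hi ?_
  rw [lp.coeFn_sum, Finset.sum_apply]
  exact Finset.sum_eq_zero fun j hj => by
    rw [lp.single_apply, Pi.single_apply, if_neg (by rintro rfl; exact hiF hj)]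

theorem BiActs.opNorm_le_of_finite_support (hB : BiActs B u v w) {C : ℝ} (hC : 0 ≤ C)
    (h : ∀ x : SeqZ p, (support ⇑x).Finite → ‖B x‖ ≤ C * ‖x‖) : ‖B‖ ≤ C := by
  refine B.opNorm_le_bound hC fun x => ?_
  rcases eq_or_ne p ∞ with rfl | hp
  · refine lp.norm_le_of_forall_le (by positivity) fun i => ?_
    -- `(B x) i` only sees the entries of `x` at `i - 1`, `i`, `i + 1`
    have hle (j : ℤ) : ‖(Icc (i - 1) (i + 1)).indicator x j‖ ≤ 1 * ‖x (id j)‖ := by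
      simpa using norm_indicator_le_norm_self _ _
    let x' : SeqZ ∞ := ⟨_, memℓp_of_norm_le_comp x injective_id.injOn zero_le_one hle⟩
    have hx' : ‖x'‖ ≤ ‖x‖ := by
      simpa using lp.norm_le_of_norm_le_comp (g := x') x injective_id.injOn zero_le_one hle
    have hBx' : B x i = B x' i := by
      rw [hB, hB]
      simp [x', indicator_of_mem, show i - 1 ≤ i + 1 by omega]
    calc ‖B x i‖ = ‖B x' i‖ := by rw [hBx']
      _ ≤ ‖B x'‖ := lp.norm_apply_le_norm ENNReal.top_ne_zero _ _
      _ ≤ C * ‖x'‖ := h x' ((finite_Icc _ _).subset (support_indicator_subset))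
      _ ≤ C * ‖x‖ := by gcongr
  · exact (lp.dense_finite_support hp).induction (P := fun x => ‖B x‖ ≤ C * ‖x‖) h
      (isClosed_le (by fun_prop) (by fun_prop)) x

theorem BiActs.norm_apply_le_of_tent (hB : BiActs B u v w) {K : ℝ} (hK : 0 ≤ K)
    (h : ∀ x : SeqZ p, (support ⇑x).Finite → ‖x‖ ≤ K * ‖B x‖) (x : SeqZ p) (i₀ : ℤ) (n : ℕ) :
    ‖x i₀‖ ≤ K * (‖B x‖ + 3 * (‖B‖ / (n + 1)) * ‖x‖) := by
  set ψ : ℤ → ℂ := fun j => (tent i₀ n j : ℂ)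
  have hψ (j : ℤ) : ‖ψ j‖ ≤ 1 := by
    simpa [ψ, abs_of_nonneg (tent.nonneg i₀ n j)] using tent.le_one i₀ n j
  have hψ' (j j' : ℤ) (hj : |(j : ℝ) - j'| = 1) : ‖ψ j - ψ j'‖ ≤ 1 / (n + 1) := by
    simpa [ψ, ← Complex.ofReal_sub, hj] using tent.abs_sub_le i₀ n j j'
  obtain ⟨X, hX, -⟩ := exists_lp_weighted_comp x injective_id zero_le_one fun j _ => hψ j
  obtain ⟨Y, hY, hYle⟩ := exists_lp_weighted_comp (B x) injective_id zero_le_one fun j _ => hψ j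
  have hcomm : ‖B X - Y‖ ≤ 3 * (‖B‖ / (n + 1)) * ‖x‖ := by
    refine lp.norm_le_three_terms x (sub_left_injective (b := (1 : ℤ))) injective_id
      (add_left_injective (1 : ℤ)) (by positivity) (a₁ := fun j => u j * (ψ (j - 1) - ψ j))
      (a₂ := 0) (a₃ := fun j => w j * (ψ (j + 1) - ψ j)) (fun j _ => ?_) (fun j _ => ?_)
      (fun j _ => ?_) fun j => ?_
    · rw [norm_mul, div_eq_mul_one_div]
      exact mul_le_mul (hB.norm_le_opNorm j).1 (hψ' _ _ (by simp)) (norm_nonneg _) (norm_nonneg _)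
    · simp only [Pi.zero_apply, norm_zero]
      positivity
    · rw [norm_mul, div_eq_mul_one_div]
      exact mul_le_mul (hB.norm_le_opNorm j).2 (hψ' _ _ (by simp)) (norm_nonneg _) (norm_nonneg _)
    · rw [lp.coeFn_sub, Pi.sub_apply, hB, hX, hX, hX, hY, id, hB]
      simp only [id, Pi.zero_apply]
      ring
  have hXfin : (support ⇑X).Finite := (finite_Icc (i₀ - n) (i₀ + n)).subset fun j hj =>
    tent.support_subset i₀ n fun h => hj (by simp [hX, ψ, h])
  calc ‖x i₀‖ = ‖X i₀‖ := by simp [hX, ψ]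
    _ ≤ ‖X‖ := lp.norm_apply_le_norm (zero_lt_one.trans_le Fact.out).ne' _ _
    _ ≤ K * ‖B X‖ := h X hXfin
    _ ≤ K * (‖Y‖ + ‖B X - Y‖) := by gcongr; exact norm_le_insert' _ _
    _ ≤ K * (‖B x‖ + 3 * (‖B‖ / (n + 1)) * ‖x‖) := by gcongr; linarith

theorem BiActs.norm_le_mul_norm_apply_of_finite_support (hB : BiActs B u v w) {K : ℝ}
    (hK : 0 ≤ K) (h : ∀ x : SeqZ p, (support ⇑x).Finite → ‖x‖ ≤ K * ‖B x‖) (x : SeqZ p) :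
    ‖x‖ ≤ K * ‖B x‖ := by
  rcases eq_or_ne p ∞ with rfl | hp
  · refine lp.norm_le_of_forall_le (by positivity) fun i₀ => ?_
    have hlim : Tendsto (fun n : ℕ => ‖B‖ / ((n : ℝ) + 1)) atTop (𝓝 0) := by
      simpa only [mul_one_div, mul_zero] using
        tendsto_one_div_add_atTop_nhds_zero_nat.const_mul ‖B‖
    have hlim' : Tendsto (fun n : ℕ => K * (‖B x‖ + 3 * (‖B‖ / (n + 1)) * ‖x‖)) atTop
        (𝓝 (K * ‖B x‖)) := by
      convert (((hlim.const_mul 3).mul_const ‖x‖).const_add ‖B x‖).const_mul K using 2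
      ring
    exact ge_of_tendsto hlim' (Eventually.of_forall (hB.norm_apply_le_of_tent hK h x i₀))
  · exact (lp.dense_finite_support hp).induction (P := fun x => ‖x‖ ≤ K * ‖B x‖) h
      (isClosed_le (by fun_prop) (by fun_prop)) x

end FiniteSupport



section Inverse

variable {𝕜 E : Type*} [NontriviallyNormedField 𝕜] [NormedAddCommGroup E] [NormedSpace 𝕜 E]

theorem norm_le_norm_ringInverse_mul {A : E →L[𝕜] E} (hA : IsUnit A) (y : E) :
    ‖y‖ ≤ ‖Ring.inverse A‖ * ‖A y‖ :=
  calc ‖y‖ = ‖Ring.inverse A (A y)‖ := by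
        rw [← mul_apply_eq_comp, Ring.inverse_mul_cancel A hA, one_apply_eq_self]
    _ ≤ ‖Ring.inverse A‖ * ‖A y‖ := (Ring.inverse A).le_opNorm _

theorem norm_ringInverse_le {B : E →L[𝕜] E} {K : ℝ} (hK : 0 ≤ K) (h : ∀ x, ‖x‖ ≤ K * ‖B x‖) :
    ‖Ring.inverse B‖ ≤ K := by
  by_cases hB : IsUnit B
  · refine (Ring.inverse B).opNorm_le_bound hK fun z => ?_
    simpa [← mul_apply_eq_comp, Ring.mul_inverse_cancel B hB] using h (Ring.inverse B z)
  · simpa [Ring.inverse_non_unit B hB] using hK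

end Inverse

section Pseudoergodic

variable {p : ℝ≥0∞} [Fact (1 ≤ p)] {U V W : Set ℂ} {A : SeqN p →L[ℂ] SeqN p}
  {au av aw : ℕ → ℂ} {B : SeqZ p →L[ℂ] SeqZ p} {bu bv bw : ℤ → ℂ}

theorem PseudoergodicN.exists_shift (hpe : PseudoergodicN U V W au av aw)
    (hb : RangesIn U V W bu bv bw) (l r : ℤ) {ε : ℝ} (hε : 0 < ε) :
    ∃ s : ℤ, s < l ∧ ∀ m : ℕ, l - 1 ≤ m + s → m + s ≤ r + 1 →
      ‖au m - bu (m + s)‖ < ε ∧ ‖av m - bv (m + s)‖ < ε ∧ ‖aw m - bw (m + s)‖ < ε := by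
  -- the window `[l - 1, r + 1]` of the diagonals of `B` reappears at `k` in those of `A`
  obtain ⟨k, hk⟩ := hpe (r - l + 3).toNat (fun t => bu (l - 1 + t)) (fun t => bv (l - 1 + t))
    (fun t => bw (l - 1 + t)) ⟨fun _ => hb.1 _, fun _ => hb.2.1 _, fun _ => hb.2.2 _⟩ ε hε
  refine ⟨l - 1 - k, by omega, fun m h₁ h₂ => ?_⟩
  have hm := hk ⟨m - k, by omega⟩
  rwa [show k + (m - k) = m by omega,
    show l - 1 + ((m - k : ℕ) : ℤ) = m + (l - 1 - k) by omega] at hm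

theorem exists_restrict_shift {f : SeqZ p} {s : ℤ} (hf : ∀ i < s, f i = 0) :
    ∃ g : SeqN p, (∀ m : ℕ, g m = f (m + s)) ∧ ‖g‖ = ‖f‖ := by
  have he : Injective fun m : ℕ => (m : ℤ) + s := fun a b h => by simpa using h
  refine ⟨⟨_, memℓp_of_norm_le_comp f he.injOn zero_le_one fun m => (one_mul _).ge⟩,
    fun _ => rfl, (lp.norm_eq_of_comp_eq he (fun i hi => ⟨(i - s).toNat, ?_⟩) fun _ => rfl).symm⟩
  have : s ≤ i := not_lt.1 fun h => hi (hf i h)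
  simp only
  omega

theorem exists_abs_norm_sub_norm_le_of_shift (hA : SemiActs A au av aw)
    (hB : BiActs B bu bv bw) {x : SeqZ p} {l r s : ℤ} (hx : ∀ i, x i ≠ 0 → l ≤ i ∧ i ≤ r)
    (hs : s < l) {ε : ℝ} (hε : 0 ≤ ε)
    (hclose : ∀ m : ℕ, l - 1 ≤ m + s → m + s ≤ r + 1 →
      ‖au m - bu (m + s)‖ ≤ ε ∧ ‖av m - bv (m + s)‖ ≤ ε ∧ ‖aw m - bw (m + s)‖ ≤ ε) :
    ∃ y : SeqN p, ‖y‖ = ‖x‖ ∧ |‖A y‖ - ‖B x‖| ≤ 3 * ε * ‖x‖ := by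
  have hx0 (i : ℤ) (hi : i < l ∨ r < i) : x i = 0 := by
    by_contra h
    have := hx i h
    omega
  have hwin (m : ℕ) (i : ℤ) (hi : x i ≠ 0) (h₁ : (m : ℤ) + s ≤ i + 1) (h₂ : i ≤ m + s + 1) :=
    hclose m (by have := hx i hi; omega) (by have := hx i hi; omega)
  obtain ⟨y, hyx, hy⟩ := exists_restrict_shift (f := x) (s := s) fun i hi => hx0 i (by omega)
  obtain ⟨G, hGB, hG⟩ := exists_restrict_shift (f := B x) (s := s) fun i hi => by
    rw [hB, hx0 (i - 1) (by omega), hx0 i (by omega), hx0 (i + 1) (by omega)]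
    ring
  have he (t : ℤ) : Injective fun m : ℕ => (m : ℤ) + t := fun a b h => by simpa using h
  have hdiff : ‖A y - G‖ ≤ 3 * ε * ‖x‖ := by
    refine lp.norm_le_three_terms x (he (s - 1)) (he s) (he (s + 1)) hε
      (a₁ := fun m => if m = 0 then 0 else au m - bu (m + s)) (fun m hm => ?_)
      (fun m hm => (hwin m _ hm (by omega) (by omega)).2.1)
      (fun m hm => (hwin m _ hm (by omega) (by omega)).2.2) fun m => ?_
    · split_ifs
      · simpa using hε
      · exact (hwin m _ hm (by omega) (by omega)).1
    · rw [lp.coeFn_sub, Pi.sub_apply, hA, hGB, hB]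
      rcases m with _ | m
      · simp [hyx, hx0 (s - 1) (by omega)]
        ring_nf
      · simp [hyx]
        ring_nf
  refine ⟨y, hy, ?_⟩
  calc |‖A y‖ - ‖B x‖| = |‖A y‖ - ‖G‖| := by rw [hG]
    _ ≤ ‖A y - G‖ := abs_norm_sub_norm_le _ _
    _ ≤ 3 * ε * ‖x‖ := hdiff

theorem PseudoergodicN.exists_abs_norm_sub_norm_le (hpe : PseudoergodicN U V W au av aw)
    (hA : SemiActs A au av aw) (hb : RangesIn U V W bu bv bw) (hB : BiActs B bu bv bw)
    {x : SeqZ p} (hx : (support ⇑x).Finite) {δ : ℝ} (hδ : 0 < δ) :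
    ∃ y : SeqN p, ‖y‖ = ‖x‖ ∧ |‖A y‖ - ‖B x‖| ≤ δ := by
  obtain ⟨l, hl⟩ := hx.bddBelow
  obtain ⟨r, hr⟩ := hx.bddAbove
  have hε : 0 < δ / (3 * (‖x‖ + 1)) := by positivity
  obtain ⟨s, hs, hclose⟩ := hpe.exists_shift hb l r hε
  obtain ⟨y, hy, hAy⟩ := exists_abs_norm_sub_norm_le_of_shift hA hB (fun i hi => ⟨hl hi, hr hi⟩)
    hs hε.le fun m h₁ h₂ =>
      have h := hclose m h₁ h₂
      ⟨h.1.le, h.2.1.le, h.2.2.le⟩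
  refine ⟨y, hy, hAy.trans ?_⟩
  calc 3 * (δ / (3 * (‖x‖ + 1))) * ‖x‖ ≤ 3 * (δ / (3 * (‖x‖ + 1))) * (‖x‖ + 1) := by
        gcongr
        linarith
    _ = δ := by field_simp

theorem PseudoergodicN.opNorm_le (hpe : PseudoergodicN U V W au av aw)
    (hA : SemiActs A au av aw) (hb : RangesIn U V W bu bv bw) (hB : BiActs B bu bv bw) :
    ‖B‖ ≤ ‖A‖ := by
  refine hB.opNorm_le_of_finite_support (norm_nonneg A) fun x hx =>
    le_of_forall_pos_le_add fun δ hδ => ?_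
  obtain ⟨y, hy, h⟩ := hpe.exists_abs_norm_sub_norm_le hA hb hB hx hδ
  calc ‖B x‖ ≤ ‖A y‖ + δ := by linarith [(abs_le.1 h).1]
    _ ≤ ‖A‖ * ‖x‖ + δ := by rw [← hy]; linarith [A.le_opNorm y]

theorem PseudoergodicN.norm_le_mul_norm_apply (hpe : PseudoergodicN U V W au av aw)
    (hA : SemiActs A au av aw) (hb : RangesIn U V W bu bv bw) (hB : BiActs B bu bv bw)
    {K : ℝ} (hK : 0 ≤ K) (hAK : ∀ y, ‖y‖ ≤ K * ‖A y‖) (x : SeqZ p) : ‖x‖ ≤ K * ‖B x‖ := by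
  refine hB.norm_le_mul_norm_apply_of_finite_support hK (fun x hx =>
    le_of_forall_pos_le_add fun δ hδ => ?_) x
  obtain ⟨y, hy, h⟩ := hpe.exists_abs_norm_sub_norm_le hA hb hB hx (δ := δ / (K + 1))
    (by positivity)
  have hKδ : K * (δ / (K + 1)) ≤ δ := by
    rw [mul_div_assoc', div_le_iff₀ (by positivity)]
    nlinarith
  calc ‖x‖ = ‖y‖ := hy.symm
    _ ≤ K * ‖A y‖ := hAK y
    _ ≤ K * (‖B x‖ + δ / (K + 1)) := by gcongr; linarith [(abs_le.1 h).2]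
    _ ≤ K * ‖B x‖ + δ := by linarith

end Pseudoergodic

theorem statement10_general (U V W : Set ℂ)
    (p : ℝ≥0∞) [Fact (1 ≤ p)]
    (A : SeqN p →L[ℂ] SeqN p) (hA : MemPEPlus U V W A) :
    (IsGreatest {x : ℝ | ∃ B : SeqN p →L[ℂ] SeqN p, MemMPlus U V W B ∧ x = ‖B‖} ‖A‖ ∧
      ‖A‖ = Mnorm U V W p) ∧
    (IsUnit A → Nnorm U V W p ≤ ‖Ring.inverse A‖) := by
  obtain ⟨au, av, aw, har, hpe, hacts⟩ := hA
  have hM {B : SeqZ p →L[ℂ] SeqZ p} (hB : MemM U V W B) : ‖B‖ ≤ ‖A‖ := by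
    obtain ⟨bu, bv, bw, hbr, hB⟩ := hB
    exact hpe.opNorm_le hacts hbr hB
  have hMPlus : IsGreatest {x : ℝ | ∃ B : SeqN p →L[ℂ] SeqN p, MemMPlus U V W B ∧ x = ‖B‖} ‖A‖ := by
    refine ⟨⟨A, ⟨au, av, aw, har, hacts⟩, rfl⟩, ?_⟩
    rintro _ ⟨B, ⟨bu, bv, bw, hbr, hB⟩, rfl⟩
    obtain ⟨B', hB', hle⟩ := hB.exists_memM_norm_le hbr
    exact hle.trans (hM hB')
  obtain ⟨A', hA', hle⟩ := hacts.exists_memM_norm_le har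
  have hMZ : IsGreatest {x : ℝ | ∃ B : SeqZ p →L[ℂ] SeqZ p, MemM U V W B ∧ x = ‖B‖} ‖A‖ :=
    ⟨⟨A', hA', hle.antisymm (hM hA')⟩, by rintro _ ⟨B, hB, rfl⟩; exact hM hB⟩
  refine ⟨⟨hMPlus, hMZ.csSup_eq.symm⟩, fun hunit => Real.sSup_le ?_ (norm_nonneg _)⟩
  rintro _ ⟨B, ⟨bu, bv, bw, hbr, hB⟩, rfl⟩
  exact norm_ringInverse_le (norm_nonneg _) (hpe.norm_le_mul_norm_apply hacts hbr hB
    (norm_nonneg _) (norm_le_norm_ringInverse_mul hunit))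

/-- (a) For `A₊ ∈ PE₊(U,V,W)`:
`‖A₊‖_p = max_{B₊ ∈ M₊(U,V,W)} ‖B₊‖_p = M_p`.  (b) If `A₊ ∈ PE₊(U,V,W)` is invertible
then `‖A₊⁻¹‖_p ≥ N_p`. -/
theorem statement10 (U V W : Set ℂ)
    (hUne : U.Nonempty) (hUc : IsCompact U) (hVne : V.Nonempty) (hVc : IsCompact V)
    (hWne : W.Nonempty) (hWc : IsCompact W)
    (p : ℝ≥0∞) [Fact (1 ≤ p)]
    (A : SeqN p →L[ℂ] SeqN p) (hA : MemPEPlus U V W A) :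
    (IsGreatest {x : ℝ | ∃ B : SeqN p →L[ℂ] SeqN p, MemMPlus U V W B ∧ x = ‖B‖} ‖A‖ ∧
      ‖A‖ = Mnorm U V W p) ∧
    (IsUnit A → Nnorm U V W p ≤ ‖Ring.inverse A‖) :=
  statement10_general U V W p A hA
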